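/- Fix a ∈ (0,1), d ∈ (0,1), and c > 0, and let G(s) := a(1-a)(1-d)·((1 - exp(-s·d))/s)·exp(-(a(1-d)/d)·(1 - exp(-s·d))). If c < a·d·(1-a)·(1-d), then there exists a unique s* > 0 with G(s*) = c; if c ≥ a·d·(1-a)·(1-d), then there is no s > 0 with G(s) = c. -/

import Mathlib

/-!
Write `u(s) = 1 - exp (-(s * d))`, so that
`G(s) = a(1-a)(1-d) · (u(s) / s) · exp (-(a(1-d)/d) · u(s))`.
Since `u` is strictly concave with `u(0) = 0`, the secant slope `u(s) / s` strictly decreases, and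
since `u` increases the exponential factor does not increase; hence `G` is strictly decreasing on
`(0, ∞)`. It tends to `u'(0) · a(1-a)(1-d) = a·d·(1-a)·(1-d)` as `s → 0⁺` and to `0` as `s → ∞`,
so by the intermediate value theorem it takes every value in between exactly once, and no other.
-/

open Real Set Filter Topology

section StrictAntiOn

variable {α β : Type*} [ConditionallyCompleteLinearOrder α] [TopologicalSpace α] [OrderTopology α]
  [DenselyOrdered α] [NoMaxOrder α] [LinearOrder β] [TopologicalSpace β] [OrderClosedTopology β]
  {f : α → β} {x₀ : α} {l L : β}

theorem StrictAntiOn.lt_of_tendsto_nhdsGT (hf : StrictAntiOn f (Ioi x₀))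
    (hL : Tendsto f (𝓝[>] x₀) (𝓝 L)) {x : α} (hx : x₀ < x) : f x < L := by
  obtain ⟨y, hx₀y, hyx⟩ := exists_between hx
  have hyL : f y ≤ L := ge_of_tendsto hL <| by
    filter_upwards [Ioo_mem_nhdsGT hx₀y] with t ht
    exact (hf ht.1 hx₀y ht.2).le
  exact (hf hx₀y hx hyx).trans_le hyL

theorem StrictAntiOn.existsUnique_eq_of_tendsto (hf : StrictAntiOn f (Ioi x₀))
    (hcont : ContinuousOn f (Ioi x₀)) (hL : Tendsto f (𝓝[>] x₀) (𝓝 L))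
    (hl : Tendsto f atTop (𝓝 l)) {c : β} (hc : c ∈ Ioo l L) : ∃! x, x₀ < x ∧ f x = c := by
  obtain ⟨x, hx, rfl⟩ := isPreconnected_Ioi.intermediate_value_Ioo (l₂ := 𝓝[>] x₀)
    (le_principal_iff.2 (Ioi_mem_atTop x₀)) inf_le_right hcont hl hL hc
  exact ⟨x, ⟨hx, rfl⟩, fun y ⟨hy, hxy⟩ => hf.injOn hy hx hxy⟩

end StrictAntiOn

section ExpSecant

variable {d : ℝ}

theorem strictConvexOn_exp_neg_mul (hd : d ≠ 0) :
    StrictConvexOn ℝ univ fun s => exp (-(s * d)) := by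
  refine ⟨convex_univ, fun x _ y _ hxy a b ha hb hab => ?_⟩
  have hxy' : -(x * d) ≠ -(y * d) := by simpa [hd] using hxy
  calc exp (-((a • x + b • y) * d)) = exp (a • -(x * d) + b • -(y * d)) := by
        simp only [smul_eq_mul]; ring_nf
    _ < a • exp (-(x * d)) + b • exp (-(y * d)) :=
        strictConvexOn_exp.2 (mem_univ _) (mem_univ _) hxy' ha hb hab

theorem strictAntiOn_one_sub_exp_neg_mul_div (hd : d ≠ 0) :
    StrictAntiOn (fun s => (1 - exp (-(s * d))) / s) (Ioi 0) := by
  intro x hx y hy hxy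
  have h := (strictConvexOn_exp_neg_mul hd).secant_strict_mono (mem_univ 0) (mem_univ x)
    (mem_univ y) hx.ne' hy.ne' hxy
  simp only [zero_mul, neg_zero, exp_zero, sub_zero] at h
  have hneg : ∀ z, (1 - exp (-(z * d))) / z = -((exp (-(z * d)) - 1) / z) := fun z => by ring
  simp only [hneg]
  exact neg_lt_neg h

theorem tendsto_one_sub_exp_neg_mul_div_nhdsNE (d : ℝ) :
    Tendsto (fun s => (1 - exp (-(s * d))) / s) (𝓝[≠] 0) (𝓝 d) := by
  have h : HasDerivAt (fun s => 1 - exp (-(s * d))) d 0 := by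
    simpa using ((hasDerivAt_mul_const (x := 0) d).neg.exp).const_sub 1
  simpa [div_eq_inv_mul] using h.tendsto_slope_zero

theorem tendsto_one_sub_exp_neg_mul_atTop (hd : 0 < d) :
    Tendsto (fun s => 1 - exp (-(s * d))) atTop (𝓝 1) := by
  simpa using tendsto_const_nhds.sub
    (tendsto_exp_neg_atTop_nhds_zero.comp (tendsto_id.atTop_mul_const hd))

end ExpSecant

section MarginalBenefit

variable {a d : ℝ}

noncomputable def marginalBenefit (a d s : ℝ) : ℝ :=
  a * (1 - a) * (1 - d) * ((1 - exp (-(s * d))) / s) *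
    exp (-(a * (1 - d) / d * (1 - exp (-(s * d)))))

theorem marginalBenefit_strictAntiOn (ha : a ∈ Ioo 0 1) (hd : d ∈ Ioo 0 1) :
    StrictAntiOn (marginalBenefit a d) (Ioi 0) := by
  intro s hs t ht hst
  have hC : 0 < a * (1 - a) * (1 - d) :=
    mul_pos (mul_pos ha.1 (sub_pos.2 ha.2)) (sub_pos.2 hd.2)
  have hk : 0 ≤ a * (1 - d) / d := div_nonneg (mul_nonneg ha.1.le (sub_pos.2 hd.2).le) hd.1.le
  have hslope_pos : 0 < (1 - exp (-(s * d))) / s :=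
    div_pos (sub_pos.2 (exp_lt_one_iff.2 (neg_neg_of_pos (mul_pos hs hd.1)))) hs
  have hslope : (1 - exp (-(t * d))) / t < (1 - exp (-(s * d))) / s :=
    strictAntiOn_one_sub_exp_neg_mul_div hd.1.ne' hs ht hst
  have hexp : exp (-(a * (1 - d) / d * (1 - exp (-(t * d))))) ≤
      exp (-(a * (1 - d) / d * (1 - exp (-(s * d))))) := by
    gcongr
    exact hd.1.le
  unfold marginalBenefit
  calc _ < a * (1 - a) * (1 - d) * ((1 - exp (-(s * d))) / s) *
        exp (-(a * (1 - d) / d * (1 - exp (-(t * d))))) := by gcongr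
    _ ≤ _ := by gcongr

theorem continuousOn_marginalBenefit (a d : ℝ) : ContinuousOn (marginalBenefit a d) (Ioi 0) := by
  unfold marginalBenefit
  fun_prop (disch := exact fun s hs => ne_of_gt hs)

theorem tendsto_marginalBenefit_nhdsGT (a d : ℝ) :
    Tendsto (marginalBenefit a d) (𝓝[>] 0) (𝓝 (a * d * (1 - a) * (1 - d))) := by
  have hexp : Continuous fun s => exp (-(a * (1 - d) / d * (1 - exp (-(s * d))))) := by fun_prop
  have h : Tendsto (marginalBenefit a d) (𝓝[>] 0) (𝓝 (a * (1 - a) * (1 - d) * d *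
      exp (-(a * (1 - d) / d * (1 - exp (-(0 * d))))))) :=
    (tendsto_const_nhds.mul ((tendsto_one_sub_exp_neg_mul_div_nhdsNE d).mono_left
      (nhdsGT_le_nhdsNE 0))).mul ((hexp.tendsto 0).mono_left nhdsWithin_le_nhds)
  convert h using 2
  simp only [zero_mul, neg_zero, exp_zero, sub_self, mul_zero, mul_one]
  ring

theorem tendsto_marginalBenefit_atTop (hd : 0 < d) :
    Tendsto (marginalBenefit a d) atTop (𝓝 0) := by
  have hu := tendsto_one_sub_exp_neg_mul_atTop hd
  have h : Tendsto (marginalBenefit a d) atTop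
      (𝓝 (a * (1 - a) * (1 - d) * 0 * exp (-(a * (1 - d) / d * 1)))) :=
    (tendsto_const_nhds.mul (hu.div_atTop tendsto_id)).mul
      ((continuous_exp.tendsto _).comp (tendsto_const_nhds.mul hu).neg)
  simpa only [mul_zero, zero_mul] using h

end MarginalBenefit

/-- Proposition 2: an interior symmetric equilibrium `s* > 0` solving `G(s*) = c`
exists if and only if `c < a·d·(1-a)·(1-d)`, and in that case it is unique, where
`G(s) = a(1-a)(1-d)·((1 - exp(-s·d))/s)·exp(-(a(1-d)/d)·(1 - exp(-s·d)))`. -/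
theorem interior_equilibrium_existence_uniqueness (a d c : ℝ)
    (ha : a ∈ Set.Ioo (0 : ℝ) 1) (hd : d ∈ Set.Ioo (0 : ℝ) 1) (hc : 0 < c) :
    (c < a * d * (1 - a) * (1 - d) →
      ∃! s : ℝ, 0 < s ∧
        a * (1 - a) * (1 - d) * ((1 - Real.exp (-(s * d))) / s) *
          Real.exp (-(a * (1 - d) / d * (1 - Real.exp (-(s * d))))) = c) ∧
    (a * d * (1 - a) * (1 - d) ≤ c →
      ¬ ∃ s : ℝ, 0 < s ∧
        a * (1 - a) * (1 - d) * ((1 - Real.exp (-(s * d))) / s) *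
          Real.exp (-(a * (1 - d) / d * (1 - Real.exp (-(s * d))))) = c) := by
  have hG := marginalBenefit_strictAntiOn ha hd
  have hG₀ := tendsto_marginalBenefit_nhdsGT a d
  refine ⟨fun hcL => hG.existsUnique_eq_of_tendsto (continuousOn_marginalBenefit a d) hG₀
    (tendsto_marginalBenefit_atTop hd.1) ⟨hc, hcL⟩, ?_⟩
  rintro hLc ⟨s, hs, hGs⟩
  change marginalBenefit a d s = c at hGs
  exact (hG.lt_of_tendsto_nhdsGT hG₀ hs).not_ge (hGs ▸ hLc)
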